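/- arXiv:1812.00762 — 6 statements merged into one kernel-verified Lean document; each statement's English description precedes it below -/
import Mathlib

section
/- For all nonempty binary words x and y, the word obtained by prepending the letter 1 to x is never equal to the word obtained by prepending the letter 0 to y. -/
theorem left_reading (x y : FreeSemigroup Bool) :
    FreeSemigroup.of true * x ≠ FreeSemigroup.of false * y := by
  intro h
  have := congrArg FreeSemigroup.head h
  simp [FreeSemigroup.head_mul] at this
end

section
/- If A is an alphabet (a set of nonempty binary words that is both left-readable and right-readable) and x ∈ A, then x is not equal to the concatenation w1·w2 of any two words w1, w2 each of which is a nonempty concatenation of elements of A. -/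
def RightReadable (S : Set (FreeSemigroup Bool)) : Prop :=
  ∀ (x y : FreeSemigroup Bool), ∀ z1 ∈ S, ∀ z2 ∈ S, x * z1 = y * z2 → z1 = z2

def LeftReadable (S : Set (FreeSemigroup Bool)) : Prop :=
  ∀ (x y : FreeSemigroup Bool), ∀ z1 ∈ S, ∀ z2 ∈ S, z1 * x = z2 * y → z1 = z2

/-- An alphabet: both left- and right-readable. -/
def IsAlphabet (S : Set (FreeSemigroup Bool)) : Prop :=
  LeftReadable S ∧ RightReadable S

lemma closure_head (A : Set (FreeSemigroup Bool)) {w : FreeSemigroup Bool}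
    (hw : w ∈ Subsemigroup.closure A) :
    ∃ a ∈ A, w = a ∨ ∃ t, w = a * t := by
  induction hw using Subsemigroup.closure_induction with
  | mem z hz => exact ⟨z, hz, Or.inl rfl⟩
  | mul u v _ _ ihu _ =>
    obtain ⟨a, ha, hcase⟩ := ihu
    rcases hcase with h | ⟨t, ht⟩
    · exact ⟨a, ha, Or.inr ⟨v, by rw [h]⟩⟩
    · exact ⟨a, ha, Or.inr ⟨t * v, by rw [ht, mul_assoc]⟩⟩

theorem alphabet_letter_not_product (A : Set (FreeSemigroup Bool)) (hA : IsAlphabet A)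
    (x : FreeSemigroup Bool) (hx : x ∈ A)
    (w1 w2 : FreeSemigroup Bool)
    (hw1 : w1 ∈ Subsemigroup.closure A) (hw2 : w2 ∈ Subsemigroup.closure A) :
    x ≠ w1 * w2 := by
  intro heq
  obtain ⟨a, ha, hcase⟩ := closure_head A hw1
  -- in either case, x = a * t for some t
  obtain ⟨t, ht⟩ : ∃ t, x = a * t := by
    rcases hcase with h | ⟨s, hs⟩
    · exact ⟨w2, by rw [heq, h]⟩
    · exact ⟨s * w2, by rw [heq, hs, mul_assoc]⟩
  have hxa : x = a := hA.1 t (t * t) x hx a ha (by rw [ht, mul_assoc])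
  rw [hxa] at ht
  have := congrArg FreeSemigroup.length ht
  rw [FreeSemigroup.length_mul] at this
  have : 0 < t.length := by simp [FreeSemigroup.length]
  omega
end

section
/- Let S1 and S2 be independent alphabets of nonempty binary words. If r1 is a word over S1 and r2 is a word over S2, then r1·r2 is neither a word over S1 nor a word over S2; moreover for any word t1 over S1, r1·r2·t1 is neither a word over S1 nor a word over S2. -/
/-- Two alphabets are independent. -/
def Independent (S1 S2 : Set (FreeSemigroup Bool)) : Prop :=
  IsAlphabet (S1 ∪ S2) ∧ S1 ∩ S2 = ∅

/-- In a free semigroup, `a ≠ a * z` (lengths differ). -/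
lemma aux_ne_mul (a z : FreeSemigroup Bool) : a ≠ a * z := by
  intro h
  have := congrArg FreeSemigroup.length h
  rw [FreeSemigroup.length_mul] at this
  have hz : 0 < z.length := Nat.succ_le_of_lt (Nat.lt_of_lt_of_le Nat.zero_lt_one
    (by simp [FreeSemigroup.length]))
  omega

lemma aux_cancel_left (x y z : FreeSemigroup Bool) (h : x * y = x * z) : y = z := by
  obtain ⟨a, l⟩ := x; obtain ⟨b, m⟩ := y; obtain ⟨c, n⟩ := z
  simp only [FreeSemigroup.mk_mul_mk, FreeSemigroup.mk.injEq] at h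
  have := List.append_cancel_left h.2
  simp only [List.cons.injEq] at this
  simp [this.1, this.2]

/-- If `S` is left readable, `a, b ∈ S` and `a * u = b * v`, then `a = b`. -/
lemma aux_head_eq {S : Set (FreeSemigroup Bool)} (hS : LeftReadable S)
    {a b : FreeSemigroup Bool} (ha : a ∈ S) (hb : b ∈ S)
    {u v : FreeSemigroup Bool} (h : a * u = b * v) : a = b :=
  hS u v a ha b hb h

/-- If `S` is left readable, `a, b ∈ S` and `a * u = b`, then `a = b`. -/
lemma aux_head_eq' {S : Set (FreeSemigroup Bool)} (hS : LeftReadable S)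
    {a b : FreeSemigroup Bool} (ha : a ∈ S) (hb : b ∈ S)
    {u : FreeSemigroup Bool} (h : a * u = b) : a = b := by
  have : a * (u * b) = b * b := by rw [← mul_assoc, h]
  exact hS (u * b) b a ha b hb this

/-- Every element of the closure decomposes as a letter, possibly followed by a word. -/
lemma aux_decomp {S : Set (FreeSemigroup Bool)} {w : FreeSemigroup Bool}
    (hw : w ∈ Subsemigroup.closure S) :
    ∃ a ∈ S, w = a ∨ ∃ w' ∈ Subsemigroup.closure S, w = a * w' := by
  induction hw using Subsemigroup.closure_induction with
  | mem x hx => exact ⟨x, hx, Or.inl rfl⟩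
  | mul x y hx hy ihx _ =>
    obtain ⟨a, haS, hcase⟩ := ihx
    rcases hcase with h | ⟨x', hx', h⟩
    · exact ⟨a, haS, Or.inr ⟨y, hy, by rw [h]⟩⟩
    · exact ⟨a, haS, Or.inr ⟨x' * y, mul_mem hx' hy, by rw [h, mul_assoc]⟩⟩

/-- A word over `S1` is never a word over `S2`, possibly extended on the right. -/
lemma aux_not_start {S1 S2 : Set (FreeSemigroup Bool)}
    (hlr : LeftReadable (S1 ∪ S2)) (hdisj : S1 ∩ S2 = ∅)
    {w v : FreeSemigroup Bool} (hw : w ∈ Subsemigroup.closure S1)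
    (hv : v ∈ Subsemigroup.closure S2) :
    w ≠ v ∧ ∀ x, w ≠ v * x := by
  obtain ⟨a, haS, hwc⟩ := aux_decomp hw
  obtain ⟨b, hbS, hvc⟩ := aux_decomp hv
  have hdisj' : ∀ c : FreeSemigroup Bool, c ∈ S1 → c ∈ S2 → False := by
    intro c hc1 hc2
    have : c ∈ S1 ∩ S2 := ⟨hc1, hc2⟩
    rw [hdisj] at this; exact this
  have haU : a ∈ S1 ∪ S2 := Or.inl haS
  have hbU : b ∈ S1 ∪ S2 := Or.inr hbS
  -- key: from any equation identifying the heads we get a = b, contradiction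
  have hab : a ≠ b := fun h => hdisj' a haS (h ▸ hbS)
  constructor
  · intro hwv
    rcases hwc with h1 | ⟨w', _, h1⟩ <;> rcases hvc with h2 | ⟨v', _, h2⟩
    · exact hab (h1 ▸ h2 ▸ hwv)
    · exact hab (aux_head_eq' hlr hbU haU (h1 ▸ h2 ▸ hwv).symm).symm
    · exact hab (aux_head_eq' hlr haU hbU (h2 ▸ h1 ▸ hwv))
    · exact hab (aux_head_eq hlr haU hbU (h2 ▸ h1 ▸ hwv))
  · intro x hwv
    rcases hwc with h1 | ⟨w', _, h1⟩
    · rcases hvc with h2 | ⟨v', _, h2⟩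
      · exact hab (aux_head_eq' hlr hbU haU (show b * x = a by rw [← h2, ← hwv, h1])).symm
      · exact hab (aux_head_eq' hlr hbU haU
          (show b * (v' * x) = a by rw [← mul_assoc, ← h2, ← hwv, h1])).symm
    · rcases hvc with h2 | ⟨v', _, h2⟩
      · exact hab (aux_head_eq hlr haU hbU (by rw [← h1, hwv, h2]))
      · exact hab (aux_head_eq hlr haU hbU (by rw [← h1, hwv, h2, mul_assoc]))

/-- Stripping a word over `S1` from the left of a word over `S1` leaves a word over `S1`. -/
lemma aux_strip {S1 : Set (FreeSemigroup Bool)} (hlr : LeftReadable S1)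
    {r : FreeSemigroup Bool} (hr : r ∈ Subsemigroup.closure S1) :
    ∀ w ∈ Subsemigroup.closure S1, ∀ z, w = r * z → z ∈ Subsemigroup.closure S1 := by
  induction hr using Subsemigroup.closure_induction with
  | mem a haS =>
    intro w hw z hwz
    obtain ⟨b, hbS, hwc⟩ := aux_decomp hw
    rcases hwc with h1 | ⟨w', hw', h1⟩
    · have hab : a = b := aux_head_eq' hlr haS hbS (show a * z = b by rw [← hwz, h1])
      exact absurd (calc b = w := h1.symm
        _ = a * z := hwz
        _ = b * z := by rw [hab]) (aux_ne_mul b z)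
    · have hba : b = a := aux_head_eq hlr hbS haS (h1 ▸ hwz).symm.symm
      have : w' = z := aux_cancel_left b w' z (by rw [← h1, hwz, hba])
      exact this ▸ hw'
  | mul x y hx hy ihx ihy =>
    intro w hw z hwz
    have h1 : y * z ∈ Subsemigroup.closure S1 :=
      ihx w hw (y * z) (by rw [hwz, mul_assoc])
    exact ihy (y * z) h1 z rfl

theorem independent_words_not_mixed (S1 S2 : Set (FreeSemigroup Bool))
    (h1 : IsAlphabet S1) (h2 : IsAlphabet S2) (hind : Independent S1 S2)
    (r1 t1 r2 : FreeSemigroup Bool)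
    (hr1 : r1 ∈ Subsemigroup.closure S1) (ht1 : t1 ∈ Subsemigroup.closure S1)
    (hr2 : r2 ∈ Subsemigroup.closure S2) :
    r1 * r2 ∉ Subsemigroup.closure S1 ∧ r1 * r2 ∉ Subsemigroup.closure S2 ∧
    r1 * r2 * t1 ∉ Subsemigroup.closure S1 ∧ r1 * r2 * t1 ∉ Subsemigroup.closure S2 := by
  have hlrU : LeftReadable (S1 ∪ S2) := hind.1.1
  have hdisj : S1 ∩ S2 = ∅ := hind.2
  have hlrU' : LeftReadable (S2 ∪ S1) := by
    intro x y z1 hz1 z2 hz2 h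
    exact hlrU x y z1 (Set.union_comm S1 S2 ▸ hz1) z2 (Set.union_comm S1 S2 ▸ hz2) h
  have hdisj' : S2 ∩ S1 = ∅ := by rw [Set.inter_comm]; exact hdisj
  refine ⟨?_, ?_, ?_, ?_⟩
  · intro hmem
    have hr2' : r2 ∈ Subsemigroup.closure S1 :=
      aux_strip h1.1 hr1 (r1 * r2) hmem r2 rfl
    exact (aux_not_start hlrU hdisj hr2' hr2).1 rfl
  · intro hmem
    exact (aux_not_start hlrU' hdisj' hmem hr1).2 r2 rfl
  · intro hmem
    have : r2 * t1 ∈ Subsemigroup.closure S1 :=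
      aux_strip h1.1 hr1 (r1 * r2 * t1) hmem (r2 * t1) (by rw [mul_assoc])
    exact (aux_not_start hlrU hdisj this hr2).2 t1 rfl
  · intro hmem
    exact (aux_not_start hlrU' hdisj' hmem hr1).2 (r2 * t1) (by rw [mul_assoc])
end

section
/- Let S1 and S2 be independent alphabets. If r1, t1 are words over S1 and r2, t2 are words over S2, then r1·r2 = t1·t2 implies r1 = t1 and r2 = t2. Moreover, for any words x, y, if x·r1·r2 = y·t1·t2 and r1 = t1, then r2 = t2 and x = y. -/
namespace FSAux
open FreeSemigroup

def toL (w : FreeSemigroup Bool) : List Bool := w.head :: w.tail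

lemma toL_mul (x y : FreeSemigroup Bool) : toL (x * y) = toL x ++ toL y := by
  simp [toL, head_mul, tail_mul]

lemma toL_inj : Function.Injective toL := by
  intro x y h
  cases x; cases y
  simp [toL] at h
  simp [h.1, h.2]

lemma mul_right_cancel' {x y z : FreeSemigroup Bool} (h : x * z = y * z) : x = y := by
  apply toL_inj
  have := congrArg toL h
  rw [toL_mul, toL_mul] at this
  exact List.append_cancel_right this

lemma mul_left_cancel' {x y z : FreeSemigroup Bool} (h : z * x = z * y) : x = y := by
  apply toL_inj
  have := congrArg toL h
  rw [toL_mul, toL_mul] at this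
  exact List.append_cancel_left this

def RR (S : Set (FreeSemigroup Bool)) : Prop :=
  ∀ (x y : FreeSemigroup Bool), ∀ z1 ∈ S, ∀ z2 ∈ S, x * z1 = y * z2 → z1 = z2

/-- `w` ends with a letter of `S`. -/
def Ends (S : Set (FreeSemigroup Bool)) (w : FreeSemigroup Bool) : Prop :=
  ∃ c ∈ S, w = c ∨ ∃ p, w = p * c

lemma ends_of_closure {S : Set (FreeSemigroup Bool)} {w : FreeSemigroup Bool}
    (h : w ∈ Subsemigroup.closure S) : Ends S w := by
  induction h using Subsemigroup.closure_induction with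
  | mem x hx => exact ⟨x, hx, Or.inl rfl⟩
  | mul x y hx hy px py =>
    obtain ⟨c, hc, hcase⟩ := py
    rcases hcase with h | ⟨p, hp⟩
    · exact ⟨c, hc, Or.inr ⟨x, by rw [h]⟩⟩
    · exact ⟨c, hc, Or.inr ⟨x * p, by rw [hp, mul_assoc]⟩⟩

lemma ends_mul {S : Set (FreeSemigroup Bool)} {w : FreeSemigroup Bool}
    (x : FreeSemigroup Bool) (h : Ends S w) : Ends S (x * w) := by
  obtain ⟨c, hc, hcase⟩ := h
  rcases hcase with h | ⟨p, hp⟩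
  · exact ⟨c, hc, Or.inr ⟨x, by rw [h]⟩⟩
  · exact ⟨c, hc, Or.inr ⟨x * p, by rw [hp, mul_assoc]⟩⟩

lemma clash {S1 S2 : Set (FreeSemigroup Bool)}
    (hA : RR (S1 ∪ S2)) (hdisj : S1 ∩ S2 = ∅)
    {u v w : FreeSemigroup Bool}
    (hu : Ends S1 u) (hw : Ends S2 w) (h : u = v * w) : False := by
  obtain ⟨c, hc, hcu⟩ := hu
  obtain ⟨d, hd, hdw⟩ := hw
  -- reduce to an equation `u = v' * d`
  have h' : u = v * d ∨ ∃ v', u = v' * d := by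
    rcases hdw with h1 | ⟨q, hq⟩
    · exact Or.inl (by rw [h, h1])
    · exact Or.inr ⟨v * q, by rw [h, hq, mul_assoc]⟩
  have hvd : ∃ v', u = v' * d := by rcases h' with h1 | h1; exacts [⟨v, h1⟩, h1]
  obtain ⟨v', hv'⟩ := hvd
  have hcd : c = d := by
    rcases hcu with h1 | ⟨p, hp⟩
    · -- c = v' * d ; use the trick c * c = (c * v') * d
      refine hA c (c * v') c (Or.inl hc) d (Or.inr hd) ?_
      rw [mul_assoc, ← hv', h1]
    · exact hA p v' c (Or.inl hc) d (Or.inr hd) (by rw [← hp, ← hv'])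
  have : c ∈ S1 ∩ S2 := ⟨hc, hcd ▸ hd⟩
  rw [hdisj] at this
  exact this

/-- decomposition of closure elements -/
lemma closure_decomp {S : Set (FreeSemigroup Bool)} {w : FreeSemigroup Bool}
    (h : w ∈ Subsemigroup.closure S) :
    w ∈ S ∨ ∃ p a, p ∈ Subsemigroup.closure S ∧ a ∈ S ∧ w = p * a := by
  induction h using Subsemigroup.closure_induction with
  | mem x hx => exact Or.inl hx
  | mul x y hx hy px py =>
    rcases py with h1 | ⟨p, a, hp, ha, hpa⟩
    · exact Or.inr ⟨x, y, hx, h1, rfl⟩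
    · exact Or.inr ⟨x * p, a, Subsemigroup.mul_mem _ hx hp, ha, by rw [hpa, mul_assoc]⟩

lemma key {S1 S2 : Set (FreeSemigroup Bool)}
    (h2r : RR S2) (hA : RR (S1 ∪ S2)) (hdisj : S1 ∩ S2 = ∅) :
    ∀ n r2, r2.length = n → r2 ∈ Subsemigroup.closure S2 →
    ∀ t2 ∈ Subsemigroup.closure S2, ∀ u v : FreeSemigroup Bool,
    Ends S1 u → Ends S1 v → u * r2 = v * t2 → r2 = t2 ∧ u = v := by
  intro n
  induction n using Nat.strong_induction_on with
  | _ n ih =>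
    intro r2 hlen hr2 t2 ht2 u v hu hv heq
    rcases closure_decomp hr2 with hr | ⟨r2', a, hr2', ha, hra⟩
    · rcases closure_decomp ht2 with ht | ⟨t2', b, ht2', hb, htb⟩
      · have hab : r2 = t2 := h2r u v r2 hr t2 ht heq
        subst hab
        exact ⟨rfl, mul_right_cancel' heq⟩
      · subst htb
        have hab : r2 = b := h2r u (v * t2') r2 hr b hb (by rw [heq, mul_assoc])
        subst hab
        exfalso
        have huv : u = v * t2' := mul_right_cancel' (by rw [heq, mul_assoc] :
          u * r2 = (v * t2') * r2)
        exact clash hA hdisj hu (ends_of_closure ht2') huv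
    · subst hra
      rcases closure_decomp ht2 with ht | ⟨t2', b, ht2', hb, htb⟩
      · have hab : a = t2 := h2r (u * r2') v a ha t2 ht (by rw [mul_assoc]; exact heq)
        subst hab
        exfalso
        have huv : v = u * r2' := (mul_right_cancel' (by rw [mul_assoc]; exact heq :
          (u * r2') * a = v * a)).symm
        exact clash hA hdisj hv (ends_of_closure hr2') huv
      · subst htb
        have hab : a = b := h2r (u * r2') (v * t2') a ha b hb
          (by rw [mul_assoc, mul_assoc]; exact heq)
        subst hab
        have heq' : u * r2' = v * t2' := mul_right_cancel'
          (by rw [mul_assoc, mul_assoc]; exact heq : (u * r2') * a = (v * t2') * a)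
        have hlt : r2'.length < n := by
          have h1 : (r2' * a).length = r2'.length + a.length := length_mul _ _
          have ha1 : 0 < a.length := Nat.succ_pos _
          omega
        obtain ⟨he1, he2⟩ := ih _ hlt r2' rfl hr2' t2' ht2' u v hu hv heq'
        exact ⟨by rw [he1], he2⟩

end FSAux

theorem independent_unique_factorization (S1 S2 : Set (FreeSemigroup Bool))
    (h1 : IsAlphabet S1) (h2 : IsAlphabet S2) (hind : Independent S1 S2)
    (r1 t1 r2 t2 : FreeSemigroup Bool)
    (hr1 : r1 ∈ Subsemigroup.closure S1) (ht1 : t1 ∈ Subsemigroup.closure S1)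
    (hr2 : r2 ∈ Subsemigroup.closure S2) (ht2 : t2 ∈ Subsemigroup.closure S2) :
    (r1 * r2 = t1 * t2 → r1 = t1 ∧ r2 = t2) ∧
    (∀ x y : FreeSemigroup Bool, x * r1 * r2 = y * t1 * t2 → r1 = t1 → r2 = t2 ∧ x = y) := by
  have h2r : FSAux.RR S2 := h2.2
  have hA : FSAux.RR (S1 ∪ S2) := hind.1.2
  have hdisj := hind.2
  constructor
  · intro heq
    obtain ⟨ha, hb⟩ := FSAux.key h2r hA hdisj r2.length r2 rfl hr2 t2 ht2 r1 t1
      (FSAux.ends_of_closure hr1) (FSAux.ends_of_closure ht1) heq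
    exact ⟨hb, ha⟩
  · intro x y heq hrt
    subst hrt
    obtain ⟨ha, hb⟩ := FSAux.key h2r hA hdisj r2.length r2 rfl hr2 t2 ht2 (x * r1) (y * r1)
      (FSAux.ends_mul x (FSAux.ends_of_closure hr1))
      (FSAux.ends_mul y (FSAux.ends_of_closure hr1)) heq
    exact ⟨ha, FSAux.mul_right_cancel' hb⟩
end

section
/- If A is an expressive alphabet (equivalently, an alphabet containing two distinct words x and y), then the sets B1 = {x·x, x·y} and B2 = {y·x, y·y} are independent expressive alphabets contained in the set of words over A. -/
/-- An alphabet is expressive iff it contains at least two distinct words. -/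
def Expressive (A : Set (FreeSemigroup Bool)) : Prop :=
  ∃ x ∈ A, ∃ y ∈ A, x ≠ y

lemma fs_left_cancel {a b c : FreeSemigroup Bool} (h : a * b = a * c) : b = c := by
  have ht : a.2 ++ b.1 :: b.2 = a.2 ++ c.1 :: c.2 := congrArg (fun z => z.2) h
  have := List.append_cancel_left ht
  cases b; cases c; simp_all

lemma fs_right_cancel {a b c : FreeSemigroup Bool} (h : a * c = b * c) : a = b := by
  have hh : a.1 = b.1 := congrArg (fun z => z.1) h
  have ht : a.2 ++ c.1 :: c.2 = b.2 ++ c.1 :: c.2 := congrArg (fun z => z.2) h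
  have := List.append_cancel_right ht
  cases a; cases b; simp_all

lemma key_left {A : Set (FreeSemigroup Bool)} (hA : IsAlphabet A)
    {a b a' b' u v : FreeSemigroup Bool} (ha : a ∈ A) (hb : b ∈ A) (ha' : a' ∈ A)
    (hb' : b' ∈ A) (h : a * b * u = a' * b' * v) : a = a' ∧ b = b' := by
  rw [mul_assoc, mul_assoc] at h
  have h1 : a = a' := hA.1 _ _ a ha a' ha' h
  subst h1
  exact ⟨rfl, hA.1 _ _ b hb b' hb' (fs_left_cancel h)⟩

lemma key_right {A : Set (FreeSemigroup Bool)} (hA : IsAlphabet A)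
    {a b a' b' u v : FreeSemigroup Bool} (ha : a ∈ A) (hb : b ∈ A) (ha' : a' ∈ A)
    (hb' : b' ∈ A) (h : u * (a * b) = v * (a' * b')) : a = a' ∧ b = b' := by
  rw [← mul_assoc, ← mul_assoc] at h
  have h1 : b = b' := hA.2 _ _ b hb b' hb' h
  subst h1
  exact ⟨hA.2 _ _ a ha a' ha' (fs_right_cancel h), rfl⟩

lemma key_eq {A : Set (FreeSemigroup Bool)} (hA : IsAlphabet A)
    {a b a' b' : FreeSemigroup Bool} (ha : a ∈ A) (hb : b ∈ A) (ha' : a' ∈ A)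
    (hb' : b' ∈ A) (h : a * b = a' * b') : a = a' ∧ b = b' := by
  have h1 : a = a' := hA.1 _ _ a ha a' ha' h
  subst h1
  exact ⟨rfl, fs_left_cancel h⟩

theorem expressive_pairs_independent (A : Set (FreeSemigroup Bool)) (hA : IsAlphabet A)
    (x y : FreeSemigroup Bool) (hx : x ∈ A) (hy : y ∈ A) (hxy : x ≠ y) :
    IsAlphabet ({x * x, x * y} : Set (FreeSemigroup Bool)) ∧
    IsAlphabet ({y * x, y * y} : Set (FreeSemigroup Bool)) ∧
    Independent {x * x, x * y} {y * x, y * y} ∧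
    Expressive {x * x, x * y} ∧ Expressive {y * x, y * y} ∧
    ({x * x, x * y} : Set (FreeSemigroup Bool)) ⊆ (Subsemigroup.closure A : Set (FreeSemigroup Bool)) ∧
    ({y * x, y * y} : Set (FreeSemigroup Bool)) ⊆ (Subsemigroup.closure A : Set (FreeSemigroup Bool)) := by
  have extract : ∀ z ∈ (({x * x, x * y} ∪ {y * x, y * y}) : Set (FreeSemigroup Bool)),
      ∃ a ∈ A, ∃ b ∈ A, z = a * b := by
    intro z hz
    simp only [Set.mem_union, Set.mem_insert_iff, Set.mem_singleton_iff] at hz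
    rcases hz with (rfl | rfl) | (rfl | rfl)
    · exact ⟨x, hx, x, hx, rfl⟩
    · exact ⟨x, hx, y, hy, rfl⟩
    · exact ⟨y, hy, x, hx, rfl⟩
    · exact ⟨y, hy, y, hy, rfl⟩
  have hU : IsAlphabet (({x * x, x * y} ∪ {y * x, y * y}) : Set (FreeSemigroup Bool)) := by
    constructor
    · intro u v z1 h1 z2 h2 h
      obtain ⟨a, ha, b, hb, rfl⟩ := extract z1 h1
      obtain ⟨a', ha', b', hb', rfl⟩ := extract z2 h2
      obtain ⟨e1, e2⟩ := key_left hA ha hb ha' hb' h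
      rw [e1, e2]
    · intro u v z1 h1 z2 h2 h
      obtain ⟨a, ha, b, hb, rfl⟩ := extract z1 h1
      obtain ⟨a', ha', b', hb', rfl⟩ := extract z2 h2
      obtain ⟨e1, e2⟩ := key_right hA ha hb ha' hb' h
      rw [e1, e2]
  have sub : ∀ S T : Set (FreeSemigroup Bool), S ⊆ T → IsAlphabet T → IsAlphabet S := by
    intro S T hST ⟨hL, hR⟩
    exact ⟨fun u v z1 h1 z2 h2 h => hL u v z1 (hST h1) z2 (hST h2) h,
           fun u v z1 h1 z2 h2 h => hR u v z1 (hST h1) z2 (hST h2) h⟩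
  have ne1 : ∀ b b' : FreeSemigroup Bool, b ∈ A → b' ∈ A → x * b ≠ y * b' := by
    intro b b' hb hb' h
    exact hxy (key_eq hA hx hb hy hb' h).1
  refine ⟨sub _ _ Set.subset_union_left hU, sub _ _ Set.subset_union_right hU,
    ⟨hU, ?_⟩, ⟨x * x, by left; rfl, x * y, by right; rfl, fun h =>
      hxy (key_eq hA hx hx hx hy h).2⟩,
    ⟨y * x, by left; rfl, y * y, by right; rfl, fun h =>
      hxy (key_eq hA hy hx hy hy h).2⟩, ?_, ?_⟩
  · ext z
    simp only [Set.mem_inter_iff, Set.mem_insert_iff, Set.mem_singleton_iff, Set.mem_empty_iff_false,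
      iff_false, not_and]
    rintro (rfl | rfl) (h | h)
    · exact ne1 x x hx hx h
    · exact ne1 x y hx hy h
    · exact ne1 y x hy hx h
    · exact ne1 y y hy hy h
  · rintro z (rfl | h)
    · exact Subsemigroup.mul_mem _ (Subsemigroup.subset_closure hx) (Subsemigroup.subset_closure hx)
    · rw [Set.mem_singleton_iff] at h; subst h
      exact Subsemigroup.mul_mem _ (Subsemigroup.subset_closure hx) (Subsemigroup.subset_closure hy)
  · rintro z (rfl | h)
    · exact Subsemigroup.mul_mem _ (Subsemigroup.subset_closure hy) (Subsemigroup.subset_closure hx)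
    · rw [Set.mem_singleton_iff] at h; subst h
      exact Subsemigroup.mul_mem _ (Subsemigroup.subset_closure hy) (Subsemigroup.subset_closure hy)
end

section
/- In every countable dense linear order with at least two elements, there exists a subset that is nonempty, bounded above, and has no least upper bound. -/
section
variable {X : Type*} [LinearOrder X] [DenselyOrdered X]

lemma dloStep_ex (x : X) (p : {p : X × X // p.1 < p.2}) :
    ∃ q : X × X, q.1 < q.2 ∧ p.1.1 < q.1 ∧ q.2 ≤ p.1.2 ∧ (x < q.1 ∨ q.2 < x) := by
  obtain ⟨⟨a, b⟩, hab⟩ := p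
  by_cases hx : x ≤ a
  · obtain ⟨c, hac, hcb⟩ := exists_between hab
    obtain ⟨d, hcd, hdb⟩ := exists_between hcb
    exact ⟨(c, d), hcd, hac, le_of_lt hdb, Or.inl (lt_of_le_of_lt hx hac)⟩
  · push_neg at hx
    have ham : a < min x b := lt_min hx hab
    obtain ⟨c, hac, hcm⟩ := exists_between ham
    obtain ⟨a', haa, hac'⟩ := exists_between hac
    exact ⟨(a', c), hac', haa, le_of_lt (lt_of_lt_of_le hcm (min_le_right _ _)),
      Or.inr (lt_of_lt_of_le hcm (min_le_left _ _))⟩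

noncomputable def dloStep (x : X) (p : {p : X × X // p.1 < p.2}) :
    {q : X × X // q.1 < q.2 ∧ p.1.1 < q.1 ∧ q.2 ≤ p.1.2 ∧ (x < q.1 ∨ q.2 < x)} :=
  ⟨(dloStep_ex x p).choose, (dloStep_ex x p).choose_spec⟩

noncomputable def dloSeq (e : ℕ → X) (p0 : {p : X × X // p.1 < p.2}) :
    ℕ → {p : X × X // p.1 < p.2}
  | 0 => p0
  | n + 1 => ⟨(dloStep (e n) (dloSeq e p0 n)).1, (dloStep (e n) (dloSeq e p0 n)).2.1⟩

end

theorem dense_order_no_lub (X : Type*) [LinearOrder X] [Countable X]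
    [DenselyOrdered X] (h2 : ∃ a b : X, a ≠ b) :
    ∃ D : Set X, D.Nonempty ∧ (∃ u : X, ∀ d ∈ D, d ≤ u) ∧ ¬ ∃ u : X, IsLUB D u := by
  obtain ⟨a0, b0, hne⟩ := h2
  have : Nonempty X := ⟨a0⟩
  obtain ⟨e, he⟩ := exists_surjective_nat X
  have hp0 : ∃ p : X × X, p.1 < p.2 := by
    rcases hne.lt_or_gt with h | h
    · exact ⟨(a0, b0), h⟩
    · exact ⟨(b0, a0), h⟩
  obtain ⟨p0, hp0⟩ := hp0
  set f : ℕ → {p : X × X // p.1 < p.2} := dloSeq e ⟨p0, hp0⟩ with hf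
  set A : ℕ → X := fun n => (f n).1.1 with hA
  set B : ℕ → X := fun n => (f n).1.2 with hB
  have hAB : ∀ n, A n < B n := fun n => (f n).2
  have hAmono : StrictMono A := by
    apply strictMono_nat_of_lt_succ
    intro n
    exact (dloStep (e n) (f n)).2.2.1
  have hBanti : Antitone B := by
    apply antitone_nat_of_succ_le
    intro n
    exact (dloStep (e n) (f n)).2.2.2.1
  have hkey : ∀ n, e n < A (n + 1) ∨ B (n + 1) < e n := fun n =>
    (dloStep (e n) (f n)).2.2.2.2
  have hub : ∀ m k, A k < B m := by
    intro m k
    rcases le_total k m with h | h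
    · exact lt_of_le_of_lt (hAmono.monotone h) (hAB m)
    · exact lt_of_lt_of_le (hAB k) (hBanti h)
  refine ⟨Set.range A, ⟨A 0, 0, rfl⟩, ⟨B 0, ?_⟩, ?_⟩
  · rintro d ⟨k, rfl⟩
    exact (hub 0 k).le
  · rintro ⟨u, hu⟩
    obtain ⟨n, rfl⟩ := he u
    rcases hkey n with h | h
    · exact absurd (hu.1 ⟨n + 1, rfl⟩) (not_le.mpr h)
    · have : e n ≤ B (n + 1) := hu.2 (by rintro d ⟨k, rfl⟩; exact (hub (n + 1) k).le)
      exact absurd (this.trans_lt h) (lt_irrefl _)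
end
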